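/- Define the quadratic normal form transformation on pairs of functions (W,Q) on ℝ by W̃ = W - 2P[Re(W)·W_α], Q̃ = Q - 2P[Re(W)·Q_α], where P is the projection onto negative frequencies and subscript α denotes ∂_α. If (W,Q) solve the linear system W_t + Q_α = -G₂(W,Q), Q_t - iW = -K₂(W,Q) with quadratic terms G₂ = -P[Q_α W̄_α - Q̄_α W_α] and K₂ = Q_α² + P[|Q_α|²], then (W̃, Q̃) satisfy W̃_t + Q̃_α = O(cubic) and Q̃_t - iW̃ = O(cubic): i.e. all quadratic terms in the equations for (W̃,Q̃) cancel. -/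

import Mathlib

open Complex

/-- Real part of a complex function, viewed as complex valued: `Re W`. -/
noncomputable def ReC (f : ℝ → ℂ) : ℝ → ℂ := fun x => ((f x).re : ℂ)

/-- The quadratic nonlinearity `G₂ = -P[Q_α W̄_α - Q̄_α W_α]`. -/
noncomputable def G2 (P : (ℝ → ℂ) →ₗ[ℂ] (ℝ → ℂ)) (W Q : ℝ → ℂ) : ℝ → ℂ :=
  fun x => -(P (fun y => deriv Q y * (starRingEnd ℂ) (deriv W y)
      - (starRingEnd ℂ) (deriv Q y) * deriv W y) x)

/-- The quadratic nonlinearity `K₂ = Q_α² + P[|Q_α|²]`. -/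
noncomputable def K2 (P : (ℝ → ℂ) →ₗ[ℂ] (ℝ → ℂ)) (Q : ℝ → ℂ) : ℝ → ℂ :=
  fun x => deriv Q x * deriv Q x
    + P (fun y => deriv Q y * (starRingEnd ℂ) (deriv Q y)) x

/-- The quadratic normal form transformation `W̃ = W - 2P[Re W · W_α]`. -/
noncomputable def NFW (P : (ℝ → ℂ) →ₗ[ℂ] (ℝ → ℂ)) (W : ℝ → ℂ) : ℝ → ℂ :=
  fun x => W x - 2 * P (fun y => ReC W y * deriv W y) x

/-- The quadratic normal form transformation `Q̃ = Q - 2P[Re W · Q_α]`. -/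
noncomputable def NFQ (P : (ℝ → ℂ) →ₗ[ℂ] (ℝ → ℂ)) (W Q : ℝ → ℂ) : ℝ → ℂ :=
  fun x => Q x - 2 * P (fun y => ReC W y * deriv Q y) x

section Aux

open Function

private lemma slice_fst {G : ℝ × ℝ → ℂ} (hG : Differentiable ℝ G) (t x : ℝ) :
    HasDerivAt (fun s => G (s, x)) (fderiv ℝ G (t, x) ((1:ℝ), (0:ℝ))) t := by
  have h1 : HasDerivAt (fun s : ℝ => (s, x)) (((1:ℝ), (0:ℝ)) : ℝ × ℝ) t :=
    (hasDerivAt_id t).prodMk (hasDerivAt_const t x)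
  simpa [Function.comp_def] using (hG (t, x)).hasFDerivAt.comp_hasDerivAt t h1

private lemma slice_snd {G : ℝ × ℝ → ℂ} (hG : Differentiable ℝ G) (t x : ℝ) :
    HasDerivAt (fun y => G (t, y)) (fderiv ℝ G (t, x) ((0:ℝ), (1:ℝ))) x := by
  have h1 : HasDerivAt (fun y : ℝ => (t, y)) (((0:ℝ), (1:ℝ)) : ℝ × ℝ) x :=
    (hasDerivAt_const x t).prodMk (hasDerivAt_id x)
  simpa [Function.comp_def] using (hG (t, x)).hasFDerivAt.comp_hasDerivAt x h1

private lemma ctsX {F : ℝ → ℝ → ℂ} (hF : ContDiff ℝ (⊤ : ℕ∞) (uncurry F)) (t : ℝ) :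
    ContDiff ℝ (⊤ : ℕ∞) (F t) :=
  hF.comp (contDiff_const.prodMk contDiff_id)

private lemma ctsT {F : ℝ → ℝ → ℂ} (hF : ContDiff ℝ (⊤ : ℕ∞) (uncurry F)) (x : ℝ) :
    ContDiff ℝ (⊤ : ℕ∞) (fun s => F s x) :=
  hF.comp (contDiff_id.prodMk contDiff_const)

private lemma smDx {F : ℝ → ℝ → ℂ} (hF : ContDiff ℝ (⊤ : ℕ∞) (uncurry F)) :
    ContDiff ℝ (⊤ : ℕ∞) (uncurry (fun a y => deriv (F a) y)) := by
  have h : uncurry (fun a y => deriv (F a) y)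
      = fun p : ℝ × ℝ => fderiv ℝ (uncurry F) p ((0:ℝ), (1:ℝ)) := by
    funext p
    exact (slice_snd (hF.differentiable (by simp)) p.1 p.2).deriv
  rw [h]
  exact (hF.fderiv_right (by simp)).clm_apply contDiff_const

private lemma smDt {F : ℝ → ℝ → ℂ} (hF : ContDiff ℝ (⊤ : ℕ∞) (uncurry F)) :
    ContDiff ℝ (⊤ : ℕ∞) (uncurry (fun a y => deriv (fun s => F s y) a)) := by
  have h : uncurry (fun a y => deriv (fun s => F s y) a)
      = fun p : ℝ × ℝ => fderiv ℝ (uncurry F) p ((1:ℝ), (0:ℝ)) := by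
    funext p
    exact (slice_fst (hF.differentiable (by simp)) p.1 p.2).deriv
  rw [h]
  exact (hF.fderiv_right (by simp)).clm_apply contDiff_const

private lemma clairaut {F : ℝ → ℝ → ℂ} (hF : ContDiff ℝ (⊤ : ℕ∞) (uncurry F)) (t x : ℝ) :
    deriv (fun s => deriv (F s) x) t = deriv (fun y => deriv (fun s => F s y) t) x := by
  have hdF : Differentiable ℝ (uncurry F) := hF.differentiable (by simp)
  have hfd : ContDiff ℝ (⊤ : ℕ∞) (fderiv ℝ (uncurry F)) := hF.fderiv_right (by simp)
  have happ : ∀ (v : ℝ × ℝ) (p : ℝ × ℝ),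
      HasFDerivAt (fun q => fderiv ℝ (uncurry F) q v)
        ((fderiv ℝ (fderiv ℝ (uncurry F)) p).flip v) p := by
    intro v p
    have h1 : HasFDerivAt (fderiv ℝ (uncurry F)) (fderiv ℝ (fderiv ℝ (uncurry F)) p) p :=
      (hfd.differentiable (by simp) p).hasFDerivAt
    simpa using h1.clm_apply (hasFDerivAt_const v p)
  have e1 : (fun s => deriv (F s) x) = fun s => fderiv ℝ (uncurry F) (s, x) ((0:ℝ), (1:ℝ)) :=
    funext fun s => (slice_snd hdF s x).deriv
  have e2 : (fun y => deriv (fun s => F s y) t)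
      = fun y => fderiv ℝ (uncurry F) (t, y) ((1:ℝ), (0:ℝ)) :=
    funext fun y => (slice_fst hdF t y).deriv
  rw [e1, e2]
  have h3 : HasDerivAt (fun s => fderiv ℝ (uncurry F) (s, x) ((0:ℝ), (1:ℝ)))
      ((fderiv ℝ (fderiv ℝ (uncurry F)) (t, x)).flip ((0:ℝ), (1:ℝ)) ((1:ℝ), (0:ℝ))) t := by
    have h1 : HasDerivAt (fun s : ℝ => (s, x)) (((1:ℝ), (0:ℝ)) : ℝ × ℝ) t :=
      (hasDerivAt_id t).prodMk (hasDerivAt_const t x)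
    simpa [Function.comp_def] using (happ ((0:ℝ), (1:ℝ)) (t, x)).comp_hasDerivAt t h1
  have h4 : HasDerivAt (fun y => fderiv ℝ (uncurry F) (t, y) ((1:ℝ), (0:ℝ)))
      ((fderiv ℝ (fderiv ℝ (uncurry F)) (t, x)).flip ((1:ℝ), (0:ℝ)) ((0:ℝ), (1:ℝ))) x := by
    have h1 : HasDerivAt (fun y : ℝ => (t, y)) (((0:ℝ), (1:ℝ)) : ℝ × ℝ) x :=
      (hasDerivAt_const x t).prodMk (hasDerivAt_id x)
    simpa [Function.comp_def] using (happ ((1:ℝ), (0:ℝ)) (t, x)).comp_hasDerivAt x h1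
  rw [h3.deriv, h4.deriv]
  simp only [ContinuousLinearMap.flip_apply]
  exact (hF.contDiffAt.isSymmSndFDerivAt (by rw [minSmoothness_of_isRCLikeNormedField]; exact WithTop.coe_le_coe.mpr le_top)).eq _ _

private lemma hasDerivAt_ReC {f : ℝ → ℂ} {d : ℂ} {y : ℝ} (h : HasDerivAt f d y) :
    HasDerivAt (fun z => (((f z).re : ℝ) : ℂ)) ((d.re : ℂ)) y := by
  simpa [Function.comp_def] using ((Complex.ofRealCLM.comp Complex.reCLM).hasFDerivAt).comp_hasDerivAt y h

private lemma lemA (P : (ℝ → ℂ) →ₗ[ℂ] (ℝ → ℂ))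
    (hPt : ∀ (F : ℝ → ℝ → ℂ) (t x : ℝ),
      deriv (fun s => P (F s) x) t = P (fun y => deriv (fun s => F s y) t) x)
    (F : ℝ → ℝ → ℂ) (t x : ℝ)
    (hF : ∀ y, DifferentiableAt ℝ (fun s => F s y) t) :
    DifferentiableAt ℝ (fun s => P (F s) x) t := by
  by_contra h
  have h0 : deriv (fun s => P (F s) x) t = 0 := deriv_zero_of_not_differentiableAt h
  have hD : P (fun y => deriv (fun s => F s y) t) x = 0 := by rw [← hPt F t x]; exact h0
  have hψ : ∀ ψ : ℝ → ℂ, P ψ x = 0 := by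
    intro ψ
    have hlin : ∀ c : ℂ, HasDerivAt (fun s : ℝ => ((s : ℂ)) * c) c t := by
      intro c
      simpa using (Complex.ofRealCLM.hasDerivAt (x := t)).mul_const c
    have h2 := hPt (fun s => F s + ((s : ℂ)) • ψ) t x
    have e1 : (fun s : ℝ => P (F s + ((s : ℂ)) • ψ) x)
        = fun s : ℝ => P (F s) x + ((s : ℂ)) * P ψ x := by
      funext s
      rw [map_add, map_smul]
      simp [smul_eq_mul]
    have e2 : (fun y => deriv (fun s : ℝ => (F s + ((s : ℂ)) • ψ) y) t)
        = fun y => deriv (fun s => F s y) t + ψ y := by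
      funext y
      have hfun : (fun s : ℝ => (F s + ((s : ℂ)) • ψ) y)
          = fun s : ℝ => F s y + ((s : ℂ)) * ψ y := by
        funext s; simp [smul_eq_mul]
      rw [hfun]
      exact ((hF y).hasDerivAt.add (hlin (ψ y))).deriv
    rw [e1, e2] at h2
    have h3 : P (fun y => deriv (fun s => F s y) t + ψ y) x
        = P (fun y => deriv (fun s => F s y) t) x + P ψ x := by
      rw [show (fun y => deriv (fun s => F s y) t + ψ y)
          = (fun y => deriv (fun s => F s y) t) + ψ from rfl, map_add]
      simp
    rw [h3] at h2
    have hnd : ¬ DifferentiableAt ℝ (fun s : ℝ => P (F s) x + ((s : ℂ)) * P ψ x) t := by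
      intro hdd
      apply h
      have := hdd.sub ((hlin (P ψ x)).differentiableAt)
      simpa [Pi.sub_def] using this
    rw [deriv_zero_of_not_differentiableAt hnd] at h2
    have h4 : P (fun y => deriv (fun s => F s y) t) x + P ψ x = 0 := by
      simpa using h2.symm
    rw [hD] at h4
    simpa using h4
  apply h
  have hall : (fun s => P (F s) x) = fun _ => (0 : ℂ) := funext fun s => hψ (F s)
  rw [hall]
  exact differentiableAt_const 0

private lemma lemC (P : (ℝ → ℂ) →ₗ[ℂ] (ℝ → ℂ))
    (hPd : ∀ f : ℝ → ℂ, Differentiable ℝ f → P (deriv f) = deriv (P f))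
    {Ψ : ℝ → ℂ} (hΨ : Differentiable ℝ Ψ) {x : ℝ}
    (hbad : ¬ DifferentiableAt ℝ (P Ψ) x) :
    ∀ u : ℝ → ℂ, Differentiable ℝ u → P (deriv u) x = 0 := by
  intro u hu
  have hPΨ0 : P (deriv Ψ) x = 0 := by
    rw [hPd Ψ hΨ]
    exact deriv_zero_of_not_differentiableAt hbad
  by_cases h2 : DifferentiableAt ℝ (P u) x
  · have hsum := hPd (Ψ + u) (hΨ.add hu)
    have hder : deriv (Ψ + u) = deriv Ψ + deriv u := by
      funext y
      exact deriv_add (hΨ y) (hu y)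
    rw [hder, map_add] at hsum
    have hnd : ¬ DifferentiableAt ℝ (P (Ψ + u)) x := by
      rw [map_add]
      intro hh
      apply hbad
      have := hh.sub h2
      simpa using this
    have h0 : deriv (P (Ψ + u)) x = 0 := deriv_zero_of_not_differentiableAt hnd
    have hx := congrFun hsum x
    rw [h0] at hx
    simp only [Pi.add_apply] at hx
    rw [hPΨ0] at hx
    simpa using hx
  · rw [hPd u hu]
    exact deriv_zero_of_not_differentiableAt h2

private lemma lemD (P : (ℝ → ℂ) →ₗ[ℂ] (ℝ → ℂ))
    (hPd : ∀ f : ℝ → ℂ, Differentiable ℝ f → P (deriv f) = deriv (P f))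
    {Ψ : ℝ → ℂ} (hΨ : Differentiable ℝ Ψ) {x : ℝ}
    (hbad : ¬ DifferentiableAt ℝ (P Ψ) x) :
    ∀ g : ℝ → ℂ, Continuous g → P g x = 0 := by
  intro g hg
  have hA : ∀ y : ℝ, HasDerivAt (fun u => ∫ z in (0:ℝ)..u, g z) (g y) y := by
    intro y
    exact intervalIntegral.integral_hasDerivAt_right (hg.intervalIntegrable 0 y)
      (hg.stronglyMeasurableAtFilter _ _) hg.continuousAt
  have hAd : Differentiable ℝ (fun u => ∫ z in (0:ℝ)..u, g z) := fun y => (hA y).differentiableAt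
  have hgd : g = deriv (fun u => ∫ z in (0:ℝ)..u, g z) := funext fun y => ((hA y).deriv).symm
  rw [hgd]
  exact lemC P hPd hΨ hbad _ hAd

end Aux

/-- The normal form transformation `(W,Q) ↦ (W̃,Q̃)` removes all quadratic terms:
if `(W,Q)` solve `W_t + Q_α = -G₂`, `Q_t - iW = -K₂`, then `(W̃,Q̃)` solve the linear
system up to explicit cubic remainders. Here `P` is the projection to negative
frequencies: we assume `P` is linear, commutes with space and time derivatives, and acts
as the identity on the holomorphic expression `Q_α²`. -/
theorem normal_form_cancels_quadratic_terms
    (P : (ℝ → ℂ) →ₗ[ℂ] (ℝ → ℂ))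
    (W Q : ℝ → ℝ → ℂ)
    (hW_smooth : ContDiff ℝ (⊤ : ℕ∞) (Function.uncurry W))
    (hQ_smooth : ContDiff ℝ (⊤ : ℕ∞) (Function.uncurry Q))
    -- P commutes with the spatial derivative
    (hPd : ∀ f : ℝ → ℂ, Differentiable ℝ f → P (deriv f) = deriv (P f))
    -- P commutes with the time derivative
    (hPt : ∀ (F : ℝ → ℝ → ℂ) (t x : ℝ),
      deriv (fun s => P (F s) x) t = P (fun y => deriv (fun s => F s y) t) x)
    -- holomorphicity: `P` acts as the identity on `Q_α²`
    (hhol : ∀ t : ℝ, P (fun x => deriv (Q t) x * deriv (Q t) x)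
        = fun x => deriv (Q t) x * deriv (Q t) x)
    -- the quadratically truncated water wave system
    (heq1 : ∀ t x : ℝ, deriv (fun s => W s x) t + deriv (Q t) x
        = -(G2 P (W t) (Q t) x))
    (heq2 : ∀ t x : ℝ, deriv (fun s => Q s x) t - Complex.I * W t x
        = -(K2 P (Q t) x)) :
    ∀ t x : ℝ,
      -- W̃_t + Q̃_α = cubic
      (deriv (fun s => NFW P (W s) x) t + deriv (NFQ P (W t) (Q t)) x
        = 2 * P (fun y => ReC (G2 P (W t) (Q t)) y * deriv (W t) y
            + ReC (W t) y * deriv (G2 P (W t) (Q t)) y) x)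
      -- Q̃_t - i W̃ = cubic
      ∧ (deriv (fun s => NFQ P (W s) (Q s) x) t - Complex.I * NFW P (W t) x
        = 2 * P (fun y => ReC (G2 P (W t) (Q t)) y * deriv (Q t) y
            + ReC (W t) y * deriv (K2 P (Q t)) y) x) := by
  intro t x
  -- basic smoothness facts
  have hWt : ContDiff ℝ (⊤ : ℕ∞) (W t) := ctsX hW_smooth t
  have hQt : ContDiff ℝ (⊤ : ℕ∞) (Q t) := ctsX hQ_smooth t
  have hWsl : ∀ y : ℝ, Differentiable ℝ (fun s => W s y) :=
    fun y => (ctsT hW_smooth y).differentiable (by simp)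
  have hQsl : ∀ y : ℝ, Differentiable ℝ (fun s => Q s y) :=
    fun y => (ctsT hQ_smooth y).differentiable (by simp)
  have hWx : ContDiff ℝ (⊤ : ℕ∞) (deriv (W t)) := ctsX (smDx hW_smooth) t
  have hQx : ContDiff ℝ (⊤ : ℕ∞) (deriv (Q t)) := ctsX (smDx hQ_smooth) t
  have hQxx : ContDiff ℝ (⊤ : ℕ∞) (deriv (deriv (Q t))) := ctsX (smDx (smDx hQ_smooth)) t
  have hU : ContDiff ℝ (⊤ : ℕ∞) (fun y => deriv (fun s => W s y) t) := ctsX (smDt hW_smooth) t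
  have hV : ContDiff ℝ (⊤ : ℕ∞) (fun y => deriv (fun s => Q s y) t) := ctsX (smDt hQ_smooth) t
  have hUx : ContDiff ℝ (⊤ : ℕ∞) (deriv (fun y => deriv (fun s => W s y) t)) :=
    ctsX (smDx (smDt hW_smooth)) t
  have hVx : ContDiff ℝ (⊤ : ℕ∞) (deriv (fun y => deriv (fun s => Q s y) t)) :=
    ctsX (smDx (smDt hQ_smooth)) t
  have hDxWsl : ∀ y : ℝ, Differentiable ℝ (fun s => deriv (W s) y) :=
    fun y => (ctsT (smDx hW_smooth) y).differentiable (by simp)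
  have hDxQsl : ∀ y : ℝ, Differentiable ℝ (fun s => deriv (Q s) y) :=
    fun y => (ctsT (smDx hQ_smooth) y).differentiable (by simp)
  -- time derivatives of slices
  have hReWt : ∀ y : ℝ, HasDerivAt (fun s : ℝ => (((W s y).re : ℝ) : ℂ))
      (((deriv (fun s => W s y) t).re : ℂ)) t :=
    fun y => hasDerivAt_ReC (hWsl y t).hasDerivAt
  have hmixW : ∀ y : ℝ, HasDerivAt (fun s => deriv (W s) y)
      (deriv (fun y' => deriv (fun s => W s y') t) y) t := by
    intro y
    have h := (hDxWsl y t).hasDerivAt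
    rwa [clairaut hW_smooth t y] at h
  have hmixQ : ∀ y : ℝ, HasDerivAt (fun s => deriv (Q s) y)
      (deriv (fun y' => deriv (fun s => Q s y') t) y) t := by
    intro y
    have h := (hDxQsl y t).hasDerivAt
    rwa [clairaut hQ_smooth t y] at h
  -- pointwise time derivative of the normal form integrands
  have hDPhi : ∀ y : ℝ, deriv (fun s => ReC (W s) y * deriv (W s) y) t
      = ((deriv (fun s => W s y) t).re : ℂ) * deriv (W t) y
        + ((W t y).re : ℂ) * deriv (fun y' => deriv (fun s => W s y') t) y :=
    fun y => ((hReWt y).mul (hmixW y)).deriv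
  have hDPsi : ∀ y : ℝ, deriv (fun s => ReC (W s) y * deriv (Q s) y) t
      = ((deriv (fun s => W s y) t).re : ℂ) * deriv (Q t) y
        + ((W t y).re : ℂ) * deriv (fun y' => deriv (fun s => Q s y') t) y :=
    fun y => ((hReWt y).mul (hmixQ y)).deriv
  -- pointwise values of G2 and K2 from the equations
  have hg2 : ∀ y : ℝ, G2 P (W t) (Q t) y
      = -(deriv (fun s => W s y) t) - deriv (Q t) y := by
    intro y
    have h := heq1 t y
    linear_combination h
  have hk2 : ∀ y : ℝ, K2 P (Q t) y
      = Complex.I * W t y - deriv (fun s => Q s y) t := by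
    intro y
    have h := heq2 t y
    linear_combination h
  have hg2deriv : ∀ y : ℝ, deriv (G2 P (W t) (Q t)) y
      = -(deriv (fun y' => deriv (fun s => W s y') t) y) - deriv (deriv (Q t)) y := by
    intro y
    rw [show G2 P (W t) (Q t) = fun y => -(deriv (fun s => W s y) t) - deriv (Q t) y
      from funext hg2]
    have h1 : HasDerivAt (fun y' => deriv (fun s => W s y') t)
        (deriv (fun y' => deriv (fun s => W s y') t) y) y :=
      (hU.differentiable (by simp) y).hasDerivAt
    have h2 : HasDerivAt (deriv (Q t)) (deriv (deriv (Q t)) y) y :=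
      (hQx.differentiable (by simp) y).hasDerivAt
    exact (h1.neg.sub h2).deriv
  have hk2deriv : ∀ y : ℝ, deriv (K2 P (Q t)) y
      = Complex.I * deriv (W t) y - deriv (fun y' => deriv (fun s => Q s y') t) y := by
    intro y
    rw [show K2 P (Q t) = fun y => Complex.I * W t y - deriv (fun s => Q s y) t
      from funext hk2]
    have h1 : HasDerivAt (W t) (deriv (W t) y) y := (hWt.differentiable (by simp) y).hasDerivAt
    have h2 : HasDerivAt (fun y' => deriv (fun s => Q s y') t)
        (deriv (fun y' => deriv (fun s => Q s y') t) y) y :=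
      (hV.differentiable (by simp) y).hasDerivAt
    exact ((h1.const_mul Complex.I).sub h2).deriv
  have hreg2 : ∀ y : ℝ, ((G2 P (W t) (Q t) y).re : ℂ)
      = -(((deriv (fun s => W s y) t).re : ℂ)) - ((deriv (Q t) y).re : ℂ) := by
    intro y
    rw [hg2 y]
    simp [Complex.sub_re, Complex.neg_re, Complex.ofReal_sub, Complex.ofReal_neg]
  have hconj : ∀ z : ℂ, z + (starRingEnd ℂ) z = 2 * ((z.re : ℝ) : ℂ) := by
    intro z
    rw [Complex.add_conj]
    push_cast
    ring
  -- the time derivative of the transformed W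
  have hdiffΦfam : DifferentiableAt ℝ
      (fun s => P (fun y => ReC (W s) y * deriv (W s) y) x) t :=
    lemA P hPt _ t x (fun y => ((hReWt y).differentiableAt).mul (hDxWsl y t))
  have hA1 : deriv (fun s => NFW P (W s) x) t
      = deriv (fun s => W s x) t
        - 2 * P (fun y => deriv (fun s => ReC (W s) y * deriv (W s) y) t) x := by
    rw [show (fun s => NFW P (W s) x)
        = fun s => W s x - 2 * P (fun y => ReC (W s) y * deriv (W s) y) x from rfl,
      deriv_fun_sub (hWsl x t) (hdiffΦfam.const_mul 2), deriv_const_mul 2 hdiffΦfam, hPt]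
  -- the time derivative of the transformed Q
  have hdiffΨfam : DifferentiableAt ℝ
      (fun s => P (fun y => ReC (W s) y * deriv (Q s) y) x) t :=
    lemA P hPt _ t x (fun y => ((hReWt y).differentiableAt).mul (hDxQsl y t))
  have hA2 : deriv (fun s => NFQ P (W s) (Q s) x) t
      = deriv (fun s => Q s x) t
        - 2 * P (fun y => deriv (fun s => ReC (W s) y * deriv (Q s) y) t) x := by
    rw [show (fun s => NFQ P (W s) (Q s) x)
        = fun s => Q s x - 2 * P (fun y => ReC (W s) y * deriv (Q s) y) x from rfl,
      deriv_fun_sub (hQsl x t) (hdiffΨfam.const_mul 2), deriv_const_mul 2 hdiffΨfam, hPt]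
  -- the equations at the point x
  have hUQx : deriv (fun s => W s x) t + deriv (Q t) x
      = P (fun y => deriv (Q t) y * (starRingEnd ℂ) (deriv (W t) y)
          - (starRingEnd ℂ) (deriv (Q t) y) * deriv (W t) y) x := by
    have h := heq1 t x
    simp only [G2, neg_neg] at h
    exact h
  have heq2x := heq2 t x
  simp only [K2] at heq2x
  have hhx : P (fun x => deriv (Q t) x * deriv (Q t) x) x
      = deriv (Q t) x * deriv (Q t) x := congrFun (hhol t) x
  constructor
  · -- first equation
    by_cases hd : DifferentiableAt ℝ (P (fun y => ReC (W t) y * deriv (Q t) y)) x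
    · -- generic case: the relevant P-image is differentiable at x
      have hΨdiff : Differentiable ℝ (fun y => ReC (W t) y * deriv (Q t) y) := fun y =>
        (hasDerivAt_ReC (hWt.differentiable (by simp) y).hasDerivAt).differentiableAt.mul
          (hQx.differentiable (by simp) y)
      have hcomm : deriv (fun y => P (fun z => ReC (W t) z * deriv (Q t) z) y) x
          = P (deriv (fun z => ReC (W t) z * deriv (Q t) z)) x := by
        rw [hPd _ hΨdiff]
      have hB1 : deriv (NFQ P (W t) (Q t)) x
          = deriv (Q t) x - 2 * P (deriv (fun z => ReC (W t) z * deriv (Q t) z)) x := by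
        rw [show NFQ P (W t) (Q t)
            = fun y => Q t y - 2 * P (fun z => ReC (W t) z * deriv (Q t) z) y from rfl,
          deriv_fun_sub (hQt.differentiable (by simp) x) (hd.const_mul 2),
          deriv_const_mul 2 hd, hcomm]
      have hPsi' : ∀ y : ℝ, deriv (fun z => ReC (W t) z * deriv (Q t) z) y
          = ((deriv (W t) y).re : ℂ) * deriv (Q t) y
            + ((W t y).re : ℂ) * deriv (deriv (Q t)) y := by
        intro y
        exact ((hasDerivAt_ReC (hWt.differentiable (by simp) y).hasDerivAt).mul
          (hQx.differentiable (by simp) y).hasDerivAt).deriv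
      have e1 : (fun y => deriv (Q t) y * (starRingEnd ℂ) (deriv (W t) y)
            - (starRingEnd ℂ) (deriv (Q t) y) * deriv (W t) y)
          = (2:ℂ) • (fun y => deriv (fun s => ReC (W s) y * deriv (W s) y) t)
            + (2:ℂ) • (deriv (fun z => ReC (W t) z * deriv (Q t) z))
            + (2:ℂ) • (fun y => ReC (G2 P (W t) (Q t)) y * deriv (W t) y
                + ReC (W t) y * deriv (G2 P (W t) (Q t)) y) := by
        funext y
        simp only [Pi.add_apply, Pi.smul_apply, smul_eq_mul]
        rw [hDPhi y, hPsi' y, hg2deriv y]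
        simp only [ReC]
        rw [hreg2 y]
        have ha := hconj (deriv (W t) y)
        have hb := hconj (deriv (Q t) y)
        linear_combination deriv (Q t) y * ha - deriv (W t) y * hb
      have hsplit1 : P (fun y => deriv (Q t) y * (starRingEnd ℂ) (deriv (W t) y)
            - (starRingEnd ℂ) (deriv (Q t) y) * deriv (W t) y) x
          = 2 * P (fun y => deriv (fun s => ReC (W s) y * deriv (W s) y) t) x
            + 2 * P (deriv (fun z => ReC (W t) z * deriv (Q t) z)) x
            + 2 * P (fun y => ReC (G2 P (W t) (Q t)) y * deriv (W t) y
                + ReC (W t) y * deriv (G2 P (W t) (Q t)) y) x := by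
        rw [e1]
        simp only [map_add, map_smul, Pi.add_apply, Pi.smul_apply, smul_eq_mul]
      rw [hA1, hB1]
      linear_combination hUQx + hsplit1
    · -- degenerate case: P kills everything at x
      have hΨdiff : Differentiable ℝ (fun y => ReC (W t) y * deriv (Q t) y) := fun y =>
        (hasDerivAt_ReC (hWt.differentiable (by simp) y).hasDerivAt).differentiableAt.mul
          (hQx.differentiable (by simp) y)
      have hzero : ∀ g : ℝ → ℂ, Continuous g → P g x = 0 := lemD P hPd hΨdiff hd
      have cRe : ∀ {g : ℝ → ℂ}, Continuous g → Continuous (fun y => ((g y).re : ℂ)) :=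
        fun hg => Complex.continuous_ofReal.comp (Complex.continuous_re.comp hg)
      -- the P-term coming from the time derivative vanishes
      have hPDΦ : P (fun y => deriv (fun s => ReC (W s) y * deriv (W s) y) t) x = 0 := by
        rw [show (fun y => deriv (fun s => ReC (W s) y * deriv (W s) y) t)
            = fun y => ((deriv (fun s => W s y) t).re : ℂ) * deriv (W t) y
              + ((W t y).re : ℂ) * deriv (fun y' => deriv (fun s => W s y') t) y
            from funext hDPhi]
        exact hzero _ (((cRe hU.continuous).mul hWx.continuous).add
          ((cRe hWt.continuous).mul hUx.continuous))
      -- the right hand side vanishes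
      have hPR1 : P (fun y => ReC (G2 P (W t) (Q t)) y * deriv (W t) y
          + ReC (W t) y * deriv (G2 P (W t) (Q t)) y) x = 0 := by
        rw [show (fun y => ReC (G2 P (W t) (Q t)) y * deriv (W t) y
              + ReC (W t) y * deriv (G2 P (W t) (Q t)) y)
            = fun y => (((-(deriv (fun s => W s y) t) - deriv (Q t) y).re : ℝ) : ℂ)
                * deriv (W t) y
              + ((W t y).re : ℂ) * (-(deriv (fun y' => deriv (fun s => W s y') t) y)
                - deriv (deriv (Q t)) y) from by
          funext y
          simp only [ReC]
          rw [hg2 y, hg2deriv y]]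
        exact hzero _ (((cRe ((hU.continuous.neg).sub hQx.continuous)).mul
            hWx.continuous).add
          ((cRe hWt.continuous).mul ((hUx.continuous.neg).sub hQxx.continuous)))
      -- the equation terms vanish at x
      have hPf0 : P (fun y => deriv (Q t) y * (starRingEnd ℂ) (deriv (W t) y)
          - (starRingEnd ℂ) (deriv (Q t) y) * deriv (W t) y) x = 0 :=
        hzero _ (((hQx.continuous).mul (Complex.continuous_conj.comp hWx.continuous)).sub
          ((Complex.continuous_conj.comp hQx.continuous).mul hWx.continuous))
      have hQα0 : deriv (Q t) x = 0 := by
        have h0 : P (fun x => deriv (Q t) x * deriv (Q t) x) x = 0 :=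
          hzero _ ((hQx.continuous).mul (hQx.continuous))
        rw [h0] at hhx
        exact mul_self_eq_zero.mp hhx.symm
      have hU0 : deriv (fun s => W s x) t = 0 := by
        rw [hPf0] at hUQx
        rw [hQα0] at hUQx
        simpa using hUQx
      have hNFQ0 : deriv (NFQ P (W t) (Q t)) x = 0 := by
        apply deriv_zero_of_not_differentiableAt
        intro h
        apply hd
        have h2 : DifferentiableAt ℝ
            (fun y => 2 * P (fun z => ReC (W t) z * deriv (Q t) z) y) x := by
          simpa [NFQ, Pi.sub_def] using ((hQt.differentiable (by simp)) x).sub h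
        rw [show (P (fun y => ReC (W t) y * deriv (Q t) y) : ℝ → ℂ)
            = fun y => (2 * P (fun z => ReC (W t) z * deriv (Q t) z) y) / 2 from
          funext fun y => by ring]
        exact h2.div_const 2
      rw [hA1, hNFQ0, hPDΦ, hPR1, hU0]
      ring
  · -- second equation
    have hscal2 : P ((2:ℂ) • Complex.I • (fun y => ReC (W t) y * deriv (W t) y)) x
        = 2 * (Complex.I * P (fun y => ReC (W t) y * deriv (W t) y) x) := by
      rw [map_smul, map_smul]
      simp [smul_eq_mul]
    have e2 : ((fun y => deriv (Q t) y * deriv (Q t) y)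
          + (fun y => deriv (Q t) y * (starRingEnd ℂ) (deriv (Q t) y))
          + (2:ℂ) • (fun y => deriv (fun s => ReC (W s) y * deriv (Q s) y) t)
          - (2:ℂ) • Complex.I • (fun y => ReC (W t) y * deriv (W t) y)
          + (2:ℂ) • (fun y => ReC (G2 P (W t) (Q t)) y * deriv (Q t) y
              + ReC (W t) y * deriv (K2 P (Q t)) y) : ℝ → ℂ)
        = 0 := by
      funext y
      simp only [Pi.add_apply, Pi.sub_apply, Pi.smul_apply, Pi.zero_apply, smul_eq_mul]
      rw [hDPsi y, hk2deriv y]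
      simp only [ReC]
      rw [hreg2 y]
      have hb := hconj (deriv (Q t) y)
      linear_combination deriv (Q t) y * hb
    have hsplit2 : P (fun y => deriv (Q t) y * deriv (Q t) y) x
          + P (fun y => deriv (Q t) y * (starRingEnd ℂ) (deriv (Q t) y)) x
          + 2 * P (fun y => deriv (fun s => ReC (W s) y * deriv (Q s) y) t) x
          - 2 * (Complex.I * P (fun y => ReC (W t) y * deriv (W t) y) x)
          + 2 * P (fun y => ReC (G2 P (W t) (Q t)) y * deriv (Q t) y
              + ReC (W t) y * deriv (K2 P (Q t)) y) x
        = 0 := by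
      have h := congrFun (congrArg (fun g => P g) e2) x
      simp only [map_add, map_sub, map_smul, map_zero, Pi.add_apply, Pi.sub_apply,
        Pi.smul_apply, Pi.zero_apply, smul_eq_mul] at h
      linear_combination h
    rw [hA2, show NFW P (W t) x
      = W t x - 2 * P (fun y => ReC (W t) y * deriv (W t) y) x from rfl]
    linear_combination heq2x + hhx - hsplit2
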